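/- Let E be a real inner product space, n ≥ 1, and for each i ∈ Fin n let fᵢ : E → ℝ be differentiable, μᵢ-strongly convex (μᵢ > 0), and with Lᵢ-Lipschitz gradient. Set L = ∑ᵢ Lᵢ, μ = minᵢ μᵢ, assume 0 < μ ≤ L, and assume F = ∑ᵢ fᵢ is μ-strongly convex and has L-Lipschitz gradient, with ∇F(x*) = 0. Let Δ ≥ 0 and 0 < α ≤ 2n/(μ + L). Suppose sequences x̂ : ℕ → E, xᵢ : ℕ → E (i ∈ Fin n), and e : ℕ → E satisfy, for all k: x̂[k+1] = x̂[k] − (α/n)·∑ᵢ ∇fᵢ(xᵢ[k]) + e[k+1], ‖e[k+1]‖ ≤ 2Δ, and ‖xᵢ[k] − x̂[k]‖ ≤ 4Δ for all i. Set ϑ = 1 − αμ/n and C = (4αL/n + 2)·Δ. Then for every k ≥ 0: ‖x̂[k] − x*‖ ≤ ϑᵏ·‖x̂[0] − x*‖ + ((1 − ϑᵏ)/(1 − ϑ))·C. -/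

import Mathlib

/-!
With `η = α / n`, the iteration is an inexact gradient step `x̂ ↦ x̂ - η ∑ᵢ ∇fᵢ(xᵢ) + e` on `F`.
The exact step `x ↦ x - η ∇F x` is a `(1 - ημ)`-contraction towards `x*` for `η ≤ 2 / (μ + L)`,
by the coercivity inequality
`μ L ‖x - y‖² + ‖∇F x - ∇F y‖² ≤ (μ + L) ⟪∇F x - ∇F y, x - y⟫`,
which follows from the cocoercivity of the gradient of the convex, `(L - μ)`-smooth function
`F - μ/2 ‖·‖²`. Evaluating `∇fᵢ` at `xᵢ` instead of `x̂` costs at most `η L 4Δ` by the local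
Lipschitz bounds, and the quantization error at most `2Δ`, so `‖x̂ₖ₊₁ - x*‖ ≤ ϑ ‖x̂ₖ - x*‖ + C`;
unrolling this recursion gives the bound.
-/

open RealInnerProductSpace Finset

theorem le_pow_mul_add_geom_of_le_mul_add {u : ℕ → ℝ} {ϑ C : ℝ} (hϑ0 : 0 ≤ ϑ) (hϑ1 : ϑ ≠ 1)
    (h : ∀ k, u (k + 1) ≤ ϑ * u k + C) (k : ℕ) :
    u k ≤ ϑ ^ k * u 0 + (1 - ϑ ^ k) / (1 - ϑ) * C := by
  induction k with
  | zero => simp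
  | succ k ih =>
    have hϑ1' : 1 - ϑ ≠ 0 := sub_ne_zero.mpr hϑ1.symm
    calc u (k + 1) ≤ ϑ * (ϑ ^ k * u 0 + (1 - ϑ ^ k) / (1 - ϑ) * C) + C :=
          (h k).trans (by gcongr)
      _ = ϑ ^ (k + 1) * u 0 + (1 - ϑ ^ (k + 1)) / (1 - ϑ) * C := by
          field_simp
          ring

section
variable {E : Type*} [NormedAddCommGroup E]

theorem nonneg_of_norm_sub_le_mul_norm_sub [Nontrivial E] {E' : Type*} [NormedAddCommGroup E']
    {g : E → E'} {K : ℝ} (hg : ∀ x y, ‖g x - g y‖ ≤ K * ‖x - y‖) : 0 ≤ K := by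
  obtain ⟨v, hv⟩ := exists_ne (0 : E)
  exact nonneg_of_mul_nonneg_left ((norm_nonneg _).trans (hg v 0))
    (by simpa using norm_pos_iff.mpr hv)

theorem norm_sum_sub_le_sum_mul {E' ι : Type*} [NormedAddCommGroup E'] (s : Finset ι)
    {g : ι → E → E'} {K : ι → ℝ} (hK : ∀ i ∈ s, 0 ≤ K i)
    (hg : ∀ i ∈ s, ∀ x y, ‖g i x - g i y‖ ≤ K i * ‖x - y‖) {a : E} {b : ι → E} {r : ℝ}
    (hb : ∀ i ∈ s, ‖a - b i‖ ≤ r) :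
    ‖∑ i ∈ s, (g i a - g i (b i))‖ ≤ (∑ i ∈ s, K i) * r := by
  rw [sum_mul]
  exact norm_sum_le_of_le s fun i hi =>
    (hg i hi a (b i)).trans (mul_le_mul_of_nonneg_left (hb i hi) (hK i hi))

variable [InnerProductSpace ℝ E]

theorem mul_norm_sq_le_inner_sub_of_strongly_convex {F : E → ℝ} {G : E → E} {μ : ℝ}
    (hstrong : ∀ x y, F y ≥ F x + ⟪G x, y - x⟫ + μ / 2 * ‖y - x‖ ^ 2) (x y : E) :
    μ * ‖x - y‖ ^ 2 ≤ ⟪G x - G y, x - y⟫ := by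
  have hxy := hstrong x y
  have hyx := hstrong y x
  rw [← neg_sub x y, inner_neg_right, norm_neg] at hxy
  rw [inner_sub_left]
  linarith

theorem add_inner_add_norm_sq_le_of_upper_quadratic_bound {φ : E → ℝ} {G : E → E} {K : ℝ}
    (hK : 0 < K) (hconv : ∀ x y, φ x + ⟪G x, y - x⟫ ≤ φ y)
    (hupper : ∀ x y, φ y ≤ φ x + ⟪G x, y - x⟫ + K / 2 * ‖y - x‖ ^ 2) (a b : E) :
    φ a + ⟪G a, b - a⟫ + ‖G b - G a‖ ^ 2 / (2 * K) ≤ φ b := by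
  set g := G b - G a
  -- compare `φ` at `a` and `b` through the point minimising the quadratic upper bound at `b`
  have h1 := hconv a (b - K⁻¹ • g)
  have h2 := hupper b (b - K⁻¹ • g)
  have hsq : K / 2 * ‖b - K⁻¹ • g - b‖ ^ 2 = ‖g‖ ^ 2 / (2 * K) := by
    rw [sub_sub_cancel_left, norm_neg, norm_smul, norm_inv, Real.norm_of_nonneg hK.le]
    field_simp
  have hg : ⟪G b, g⟫ - ⟪G a, g⟫ = ‖g‖ ^ 2 := by
    rw [← inner_sub_left, real_inner_self_eq_norm_sq]
  rw [hsq, sub_sub_cancel_left, inner_neg_right, real_inner_smul_right] at h2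
  rw [sub_right_comm, inner_sub_right, real_inner_smul_right] at h1
  linear_combination h1 + h2 - K⁻¹ * hg

theorem norm_sub_sq_le_mul_inner_of_upper_quadratic_bound {φ : E → ℝ} {G : E → E} {K : ℝ}
    (hK : 0 < K) (hconv : ∀ x y, φ x + ⟪G x, y - x⟫ ≤ φ y)
    (hupper : ∀ x y, φ y ≤ φ x + ⟪G x, y - x⟫ + K / 2 * ‖y - x‖ ^ 2) (x y : E) :
    ‖G x - G y‖ ^ 2 ≤ K * ⟪G x - G y, x - y⟫ := by
  have hxy := add_inner_add_norm_sq_le_of_upper_quadratic_bound hK hconv hupper x y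
  have hyx := add_inner_add_norm_sq_le_of_upper_quadratic_bound hK hconv hupper y x
  rw [← neg_sub x y, inner_neg_right, norm_sub_rev] at hxy
  have hsum : ‖G x - G y‖ ^ 2 / (2 * K) * 2 ≤ ⟪G x - G y, x - y⟫ := by
    rw [inner_sub_left]
    linarith
  calc ‖G x - G y‖ ^ 2 = K * (‖G x - G y‖ ^ 2 / (2 * K) * 2) := by field_simp
    _ ≤ K * ⟪G x - G y, x - y⟫ := by gcongr

variable [CompleteSpace E]

theorem hasDerivAt_comp_add_smul {f : E → ℝ} (hf : Differentiable ℝ f) (x v : E) (t : ℝ) :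
    HasDerivAt (fun s : ℝ => f (x + s • v)) ⟪gradient f (x + t • v), v⟫ t := by
  have hline : HasDerivAt (fun s : ℝ => x + s • v) v t := by
    simpa using ((hasDerivAt_id t).smul_const v).const_add x
  simpa [Function.comp_def] using (hf (x + t • v)).hasGradientAt.hasFDerivAt.comp_hasDerivAt t hline

theorem upper_quadratic_bound_of_lipschitz_gradient {f : E → ℝ} (hf : Differentiable ℝ f)
    {K : ℝ} (hlip : ∀ x y, ‖gradient f x - gradient f y‖ ≤ K * ‖x - y‖) (x y : E) :
    f y ≤ f x + ⟪gradient f x, y - x⟫ + K / 2 * ‖y - x‖ ^ 2 := by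
  set v := y - x
  let ψ : ℝ → ℝ := fun t => f (x + t • v) - t * ⟪gradient f x, v⟫ - K / 2 * t ^ 2 * ‖v‖ ^ 2
  have hψ : ∀ t, HasDerivAt ψ (⟪gradient f (x + t • v) - gradient f x, v⟫ - K * t * ‖v‖ ^ 2) t := by
    intro t
    have hsq := ((hasDerivAt_pow 2 t).const_mul (K / 2)).mul_const (‖v‖ ^ 2)
    refine (((hasDerivAt_comp_add_smul hf x v t).sub
      ((hasDerivAt_id t).mul_const ⟪gradient f x, v⟫)).sub hsq).congr_deriv ?_
    rw [inner_sub_left]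
    simp only [one_mul, Nat.cast_ofNat]
    ring
  have hanti : AntitoneOn ψ (Set.Icc 0 1) := by
    refine antitoneOn_of_hasDerivWithinAt_nonpos (convex_Icc 0 1)
      (fun t _ => (hψ t).continuousAt.continuousWithinAt) (fun t _ => (hψ t).hasDerivWithinAt) ?_
    intro t ht
    rw [interior_Icc] at ht
    have hgrad : ‖gradient f (x + t • v) - gradient f x‖ ≤ K * (t * ‖v‖) := by
      simpa [norm_smul, abs_of_pos ht.1] using hlip (x + t • v) x
    nlinarith [real_inner_le_norm (gradient f (x + t • v) - gradient f x) v, norm_nonneg v]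
  have h01 := hanti (Set.left_mem_Icc.mpr zero_le_one) (Set.right_mem_Icc.mpr zero_le_one)
    zero_le_one
  simp only [ψ, v, zero_smul, add_zero, one_smul, add_sub_cancel] at h01
  linarith

theorem mul_norm_sq_add_norm_sq_le_inner_gradient_sub {F : E → ℝ} (hF : Differentiable ℝ F)
    {μ L : ℝ} (hμ : 0 ≤ μ) (hμL : μ ≤ L)
    (hstrong : ∀ x y, F y ≥ F x + ⟪gradient F x, y - x⟫ + μ / 2 * ‖y - x‖ ^ 2)
    (hsmooth : ∀ x y, ‖gradient F x - gradient F y‖ ≤ L * ‖x - y‖) (x y : E) :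
    μ * L * ‖x - y‖ ^ 2 + ‖gradient F x - gradient F y‖ ^ 2 ≤
      (μ + L) * ⟪gradient F x - gradient F y, x - y⟫ := by
  have hmono := mul_norm_sq_le_inner_sub_of_strongly_convex hstrong x y
  obtain rfl | hμL := hμL.eq_or_lt
  · have hd : ‖gradient F x - gradient F y‖ ^ 2 ≤ (μ * ‖x - y‖) ^ 2 :=
      pow_le_pow_left₀ (norm_nonneg _) (hsmooth x y) 2
    linear_combination hd + 2 * mul_le_mul_of_nonneg_left hmono hμ
  -- `F - μ/2 ‖·‖²` is convex with `(L - μ)`-Lipschitz gradient, hence its gradient is cocoercive.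
  have hexpand : ∀ a b : E,
      μ / 2 * ‖b‖ ^ 2 = μ / 2 * ‖a‖ ^ 2 + μ * ⟪a, b - a⟫ + μ / 2 * ‖b - a‖ ^ 2 := fun a b => by
    rw [← add_sub_cancel a b, add_sub_cancel_left, norm_add_sq_real]
    ring
  have hinner : ∀ a b : E,
      ⟪gradient F a - μ • a, b - a⟫ = ⟪gradient F a, b - a⟫ - μ * ⟪a, b - a⟫ := fun a b => by
    rw [inner_sub_left, real_inner_smul_left]
  have hcoer := norm_sub_sq_le_mul_inner_of_upper_quadratic_bound
    (φ := fun w => F w - μ / 2 * ‖w‖ ^ 2) (G := fun w => gradient F w - μ • w) (sub_pos.mpr hμL)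
    (fun a b => by linarith [hstrong a b, hexpand a b, hinner a b])
    (fun a b => by
      linarith [upper_quadratic_bound_of_lipschitz_gradient hF hsmooth a b, hexpand a b,
        hinner a b])
    x y
  have hsub : gradient F x - μ • x - (gradient F y - μ • y) =
      gradient F x - gradient F y - μ • (x - y) := by rw [smul_sub]; abel
  simp only [hsub] at hcoer
  set u := x - y
  set d := gradient F x - gradient F y
  rw [norm_sub_sq_real, real_inner_smul_right, inner_sub_left d, real_inner_smul_left,
    real_inner_self_eq_norm_sq, norm_smul, Real.norm_eq_abs, mul_pow, sq_abs] at hcoer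
  linear_combination hcoer

theorem norm_sub_smul_gradient_sub_le {F : E → ℝ} (hF : Differentiable ℝ F)
    {μ L : ℝ} (hμ : 0 < μ) (hμL : μ ≤ L)
    (hstrong : ∀ x y, F y ≥ F x + ⟪gradient F x, y - x⟫ + μ / 2 * ‖y - x‖ ^ 2)
    (hsmooth : ∀ x y, ‖gradient F x - gradient F y‖ ≤ L * ‖x - y‖)
    {η : ℝ} (hη0 : 0 ≤ η) (hη : η * (μ + L) ≤ 2) (x y : E) :
    ‖x - y - η • (gradient F x - gradient F y)‖ ≤ (1 - η * μ) * ‖x - y‖ := by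
  set u := x - y
  set d := gradient F x - gradient F y
  have hcoer := mul_norm_sq_add_norm_sq_le_inner_gradient_sub hF hμ.le hμL hstrong hsmooth x y
  have hmono := mul_norm_sq_le_inner_sub_of_strongly_convex hstrong x y
  have hd : μ * ‖u‖ ≤ ‖d‖ := by
    obtain hu | hu := (norm_nonneg u).eq_or_lt
    · simp [← hu]
    refine le_of_mul_le_mul_right ?_ hu
    calc μ * ‖u‖ * ‖u‖ = μ * ‖u‖ ^ 2 := by ring
      _ ≤ ⟪d, u⟫ := hmono
      _ ≤ ‖d‖ * ‖u‖ := real_inner_le_norm d u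
  have hd2 : (μ * ‖u‖) ^ 2 ≤ ‖d‖ ^ 2 := pow_le_pow_left₀ (by positivity) hd 2
  have hfactor : 0 ≤ 1 - η * μ := by nlinarith
  rw [← sq_le_sq₀ (norm_nonneg _) (mul_nonneg hfactor (norm_nonneg u)), norm_sub_sq_real,
    real_inner_smul_right, norm_smul, Real.norm_of_nonneg hη0, real_inner_comm]
  -- multiplied by `μ + L`, the gap is a sum of two nonnegative terms
  have hgap : 0 ≤ (μ + L) *
      (((1 - η * μ) * ‖u‖) ^ 2 - (‖u‖ ^ 2 - 2 * (η * ⟪d, u⟫) + (η * ‖d‖) ^ 2)) := by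
    have key : (μ + L) * (((1 - η * μ) * ‖u‖) ^ 2 - (‖u‖ ^ 2 - 2 * (η * ⟪d, u⟫) + (η * ‖d‖) ^ 2))
        = 2 * η * ((μ + L) * ⟪d, u⟫ - (μ * L * ‖u‖ ^ 2 + ‖d‖ ^ 2))
          + η * (2 - η * (μ + L)) * (‖d‖ ^ 2 - (μ * ‖u‖) ^ 2) := by ring
    rw [key]
    have : 0 ≤ 2 - η * (μ + L) := by linarith
    have : 0 ≤ ‖d‖ ^ 2 - (μ * ‖u‖) ^ 2 := by linarith
    have : 0 ≤ (μ + L) * ⟪d, u⟫ - (μ * L * ‖u‖ ^ 2 + ‖d‖ ^ 2) := by linarith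
    positivity
  nlinarith

theorem norm_inexact_gradient_step_sub_le {F : E → ℝ} (hF : Differentiable ℝ F)
    {μ L : ℝ} (hμ : 0 < μ) (hμL : μ ≤ L)
    (hstrong : ∀ x y, F y ≥ F x + ⟪gradient F x, y - x⟫ + μ / 2 * ‖y - x‖ ^ 2)
    (hsmooth : ∀ x y, ‖gradient F x - gradient F y‖ ≤ L * ‖x - y‖)
    {η : ℝ} (hη0 : 0 ≤ η) (hη : η * (μ + L) ≤ 2) {xstar : E} (hxstar : gradient F xstar = 0)
    {y g e : E} {δ ε : ℝ} (hg : ‖gradient F y - g‖ ≤ δ) (he : ‖e‖ ≤ ε) :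
    ‖y - η • g + e - xstar‖ ≤ (1 - η * μ) * ‖y - xstar‖ + η * δ + ε := by
  have hsplit : y - η • g + e - xstar =
      (y - xstar - η • (gradient F y - gradient F xstar)) + η • (gradient F y - g) + e := by
    rw [hxstar]; module
  rw [hsplit]
  refine norm_add₃_le.trans ?_
  rw [norm_smul, Real.norm_of_nonneg hη0]
  gcongr
  exact norm_sub_smul_gradient_sub_le hF hμ hμL hstrong hsmooth hη0 hη y xstar

theorem gradient_fun_sum {ι : Type*} (s : Finset ι) {f : ι → E → ℝ} {x : E}
    (hf : ∀ i ∈ s, DifferentiableAt ℝ (f i) x) :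
    gradient (fun y => ∑ i ∈ s, f i y) x = ∑ i ∈ s, gradient (f i) x := by
  refine HasGradientAt.gradient ?_
  rw [hasGradientAt_iff_hasFDerivAt, map_sum]
  exact HasFDerivAt.fun_sum fun i hi => (hf i hi).hasGradientAt.hasFDerivAt

end

theorem quantized_gradient_descent_linear_convergence_general
    {E : Type*} [NormedAddCommGroup E] [InnerProductSpace ℝ E] [CompleteSpace E]
    (n : ℕ)
    (f : Fin n → E → ℝ) (Lloc : Fin n → ℝ)
    (hdiff : ∀ i, Differentiable ℝ (f i))
    (hsmoothloc : ∀ i, ∀ x y : E,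
      ‖gradient (f i) x - gradient (f i) y‖ ≤ Lloc i * ‖x - y‖)
    (L μ : ℝ) (hL : L = ∑ i, Lloc i)
    (hμ0 : 0 < μ) (hμL : μ ≤ L)
    (F : E → ℝ) (hF : F = fun y => ∑ i, f i y)
    (hstrong : ∀ x y : E,
      F y ≥ F x + ⟪gradient F x, y - x⟫ + (μ / 2) * ‖y - x‖ ^ 2)
    (hsmooth : ∀ x y : E, ‖gradient F x - gradient F y‖ ≤ L * ‖x - y‖)
    (xstar : E) (hxstar : gradient F xstar = 0)
    (Δ : ℝ)
    (α : ℝ) (hα0 : 0 < α) (hα : α ≤ 2 * n / (μ + L))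
    (xhat : ℕ → E) (x : Fin n → ℕ → E) (e : ℕ → E)
    (hrec : ∀ k, xhat (k + 1) = xhat k - (α / n) • (∑ i, gradient (f i) (x i k)) + e (k + 1))
    (he : ∀ k, ‖e (k + 1)‖ ≤ 2 * Δ)
    (hx : ∀ k, ∀ i, ‖x i k - xhat k‖ ≤ 4 * Δ)
    (ϑ C : ℝ) (hϑ : ϑ = 1 - α * μ / n) (hC : C = (4 * α * L / n + 2) * Δ) :
    ∀ k : ℕ, ‖xhat k - xstar‖ ≤ ϑ ^ k * ‖xhat 0 - xstar‖ + ((1 - ϑ ^ k) / (1 - ϑ)) * C := by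
  have hμL0 : 0 < μ + L := by linarith
  have hn : (0 : ℝ) < n := by
    linarith [(div_pos_iff_of_pos_right hμL0).mp (hα0.trans_le hα)]
  have hη : α / n * (μ + L) ≤ 2 := by
    rwa [div_mul_eq_mul_div, div_le_iff₀ hn, ← le_div_iff₀ hμL0]
  have hϑη : ϑ = 1 - α / n * μ := by rw [hϑ]; ring
  have hgradF : ∀ z, gradient F z = ∑ i, gradient (f i) z := fun z => by
    rw [hF]; exact gradient_fun_sum univ fun i _ => (hdiff i).differentiableAt
  have hFdiff : Differentiable ℝ F := hF ▸ Differentiable.fun_sum fun i _ => hdiff i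
  have hstep : ∀ k, ‖xhat (k + 1) - xstar‖ ≤ ϑ * ‖xhat k - xstar‖ + C := by
    intro k
    rcases subsingleton_or_nontrivial E with hE | hE
    · have hΔ : 0 ≤ 2 * Δ := (norm_nonneg _).trans (he 0)
      have hC0 : 0 ≤ C := hC ▸ mul_nonneg (by have := hμ0.trans_le hμL; positivity) (by linarith)
      simpa [Subsingleton.elim _ (0 : E)] using hC0
    have herr : ‖gradient F (xhat k) - ∑ i, gradient (f i) (x i k)‖ ≤ L * (4 * Δ) := by
      rw [hgradF, ← sum_sub_distrib, hL]
      exact norm_sum_sub_le_sum_mul univ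
        (fun i _ => nonneg_of_norm_sub_le_mul_norm_sub (hsmoothloc i)) (fun i _ => hsmoothloc i)
        fun i _ => by rw [norm_sub_rev]; exact hx k i
    calc ‖xhat (k + 1) - xstar‖ ≤ ϑ * ‖xhat k - xstar‖ + α / n * (L * (4 * Δ)) + 2 * Δ := by
          rw [hrec, hϑη]
          exact norm_inexact_gradient_step_sub_le hFdiff hμ0 hμL hstrong hsmooth (by positivity) hη
            hxstar herr (he k)
      _ = ϑ * ‖xhat k - xstar‖ + C := by rw [hC]; ring
  have hϑ1 : ϑ < 1 := by
    rw [hϑη]; have : 0 < α / n * μ := by positivity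
    linarith
  exact le_pow_mul_add_geom_of_le_mul_add (by rw [hϑη]; nlinarith) hϑ1.ne hstep

/-- Theorem 1: linear convergence of quantized averaged gradient descent to a
neighborhood of the optimal solution. -/
theorem quantized_gradient_descent_linear_convergence
    {E : Type*} [NormedAddCommGroup E] [InnerProductSpace ℝ E] [CompleteSpace E]
    (n : ℕ) (hn : 1 ≤ n)
    (f : Fin n → E → ℝ) (μloc Lloc : Fin n → ℝ)
    (hdiff : ∀ i, Differentiable ℝ (f i))
    (hμloc : ∀ i, 0 < μloc i)
    (hstrongloc : ∀ i, ∀ x y : E,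
      f i y ≥ f i x + ⟪gradient (f i) x, y - x⟫ + (μloc i / 2) * ‖y - x‖ ^ 2)
    (hsmoothloc : ∀ i, ∀ x y : E,
      ‖gradient (f i) x - gradient (f i) y‖ ≤ Lloc i * ‖x - y‖)
    (L μ : ℝ) (hL : L = ∑ i, Lloc i) (hμ : μ = ⨅ i, μloc i)
    (hμ0 : 0 < μ) (hμL : μ ≤ L)
    (F : E → ℝ) (hF : F = fun y => ∑ i, f i y)
    (hstrong : ∀ x y : E,
      F y ≥ F x + ⟪gradient F x, y - x⟫ + (μ / 2) * ‖y - x‖ ^ 2)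
    (hsmooth : ∀ x y : E, ‖gradient F x - gradient F y‖ ≤ L * ‖x - y‖)
    (xstar : E) (hxstar : gradient F xstar = 0)
    (Δ : ℝ) (hΔ : 0 ≤ Δ)
    (α : ℝ) (hα0 : 0 < α) (hα : α ≤ 2 * n / (μ + L))
    (xhat : ℕ → E) (x : Fin n → ℕ → E) (e : ℕ → E)
    (hrec : ∀ k, xhat (k + 1) = xhat k - (α / n) • (∑ i, gradient (f i) (x i k)) + e (k + 1))
    (he : ∀ k, ‖e (k + 1)‖ ≤ 2 * Δ)
    (hx : ∀ k, ∀ i, ‖x i k - xhat k‖ ≤ 4 * Δ)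
    (ϑ C : ℝ) (hϑ : ϑ = 1 - α * μ / n) (hC : C = (4 * α * L / n + 2) * Δ) :
    ∀ k : ℕ, ‖xhat k - xstar‖ ≤ ϑ ^ k * ‖xhat 0 - xstar‖ + ((1 - ϑ ^ k) / (1 - ϑ)) * C :=
  quantized_gradient_descent_linear_convergence_general n f Lloc hdiff hsmoothloc L μ hL hμ0 hμL F
    hF hstrong hsmooth xstar hxstar Δ α hα0 hα xhat x e hrec he hx ϑ C hϑ hC
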